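/- arXiv:1903.00162 — 4 statements merged into one kernel-verified Lean document; each statement's English description precedes it below -/
import Mathlib

section
/- Let n ≥ 1 and set c_n = (n/2)^(n/2) * exp(−n/2) / Γ(n/2). Then for all real numbers y₁, …, yₙ and all real μ with S(μ) := ∑_{i=1}^n (yᵢ − μ)² > 0, the profile likelihood equals c_n times the Jeffreys-prior marginal likelihood: sup_{v > 0} (2πv)^(-n/2) * exp(−S(μ)/(2v)) = c_n * ∫₀^∞ (2πv)^(-n/2) * exp(−S(μ)/(2v)) * (1/v) dv. In particular the proportionality constant c_n depends only on n and not on μ or on the data y₁, …, yₙ. -/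
open Real Set MeasureTheory

lemma marginal_eval (a S : ℝ) (ha : 0 < a) (hS : 0 < S) :
    ∫ v in Ioi (0:ℝ), (2 * π * v) ^ (-a) * Real.exp (-S / (2 * v)) * (1 / v)
      = (π * S) ^ (-a) * Real.Gamma a := by
  have key := MeasureTheory.integral_comp_rpow_Ioi
    (fun v : ℝ => (2 * π * v) ^ (-a) * Real.exp (-S / (2 * v)) * (1 / v))
    (p := -1) (by norm_num)
  rw [← key]
  have : ∀ x ∈ Ioi (0:ℝ), (|(-1:ℝ)| * x ^ ((-1:ℝ) - 1)) •
      ((2 * π * (x ^ (-1:ℝ))) ^ (-a) * Real.exp (-S / (2 * (x ^ (-1:ℝ)))) * (1 / (x ^ (-1:ℝ))))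
      = (2 * π) ^ (-a) * (x ^ (a - 1) * Real.exp (-(S / 2 * x))) := by
    intro x hx
    have hx0 : 0 < x := hx
    rw [Real.rpow_neg_one]
    have h1 : (2 * π * x⁻¹) ^ (-a) = (2 * π) ^ (-a) * x ^ a := by
      rw [Real.mul_rpow (by positivity) (by positivity)]
      congr 1
      rw [← Real.rpow_neg_one x, ← Real.rpow_mul hx0.le]
      norm_num
    have h2 : -S / (2 * x⁻¹) = -(S / 2 * x) := by
      field_simp
    rw [h1, h2, smul_eq_mul]
    have h3 : |(-1:ℝ)| * x ^ ((-1:ℝ) - 1) = x ^ (-2:ℝ) := by norm_num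
    rw [h3, one_div, inv_inv]
    rw [show x ^ (-2:ℝ) * ((2 * π) ^ (-a) * x ^ a * Real.exp (-(S / 2 * x)) * x)
        = (2 * π) ^ (-a) * ((x ^ (-2:ℝ) * x ^ a * x) * Real.exp (-(S / 2 * x))) by ring]
    congr 2
    rw [← Real.rpow_add hx0, ← Real.rpow_add_one hx0.ne']
    congr 1
    ring
  rw [setIntegral_congr_fun measurableSet_Ioi this, integral_const_mul,
    Real.integral_rpow_mul_exp_neg_mul_Ioi ha (by positivity : (0:ℝ) < S / 2)]
  rw [← mul_assoc]
  congr 1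
  rw [one_div, Real.inv_rpow (by positivity), ← Real.rpow_neg (by positivity),
    ← Real.mul_rpow (by positivity) (by positivity)]
  congr 1
  ring

lemma sup_eval (a S : ℝ) (ha : 0 < a) (hS : 0 < S) :
    IsGreatest ((fun v : ℝ => (2 * π * v) ^ (-a) * Real.exp (-S / (2 * v))) '' Ioi 0)
      ((2 * π * (S / (2 * a))) ^ (-a) * Real.exp (-a)) := by
  have hv0 : (0:ℝ) < S / (2 * a) := by positivity
  constructor
  · refine ⟨S / (2 * a), hv0, ?_⟩
    have : -S / (2 * (S / (2 * a))) = -a := by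
      field_simp
    simp only [this]
  · rintro z ⟨v, hv, rfl⟩
    have hv0' : (0:ℝ) < v := hv
    dsimp only
    set v₀ := S / (2 * a) with hv₀def
    have hexp : ∀ w : ℝ, 0 < w → (2 * π * w) ^ (-a) * Real.exp (-S / (2 * w))
        = Real.exp (Real.log (2 * π * w) * (-a) + -S / (2 * w)) := by
      intro w hw
      rw [Real.rpow_def_of_pos (by positivity), Real.exp_add]
    have hrhs : (2 * π * v₀) ^ (-a) * Real.exp (-a)
        = Real.exp (Real.log (2 * π * v₀) * (-a) + -a) := by
      rw [Real.rpow_def_of_pos (by positivity), Real.exp_add]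
    rw [hexp v hv0', hrhs]
    apply Real.exp_le_exp.mpr
    have hlog : Real.log (v₀ / v) ≤ v₀ / v - 1 := Real.log_le_sub_one_of_pos (by positivity)
    have hlogsplit : Real.log (2 * π * v₀) = Real.log (2 * π * v) + Real.log (v₀ / v) := by
      rw [← Real.log_mul (by positivity) (by positivity)]
      congr 1
      field_simp
    have hmul : a * Real.log (v₀ / v) ≤ a * (v₀ / v - 1) :=
      mul_le_mul_of_nonneg_left hlog ha.le
    have hval : a * (v₀ / v) = S / (2 * v) := by
      rw [hv₀def]; field_simp
    have hmul2 : a * Real.log (v₀ / v) ≤ S / (2 * v) - a := by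
      rw [mul_sub, mul_one, hval] at hmul
      exact hmul
    have hexpand : Real.log (2 * π * v₀) * (-a)
        = Real.log (2 * π * v) * (-a) - a * Real.log (v₀ / v) := by
      rw [hlogsplit]; ring
    have hneg : -S / (2 * v) = -(S / (2 * v)) := neg_div _ _
    linarith [hmul2, hexpand, hneg]

/-- With `c_n = (n/2)^(n/2) e^(-n/2) / Γ(n/2)`, for all data `y` and
all `μ` with `S(μ) = ∑ (yᵢ - μ)² > 0`, the profile likelihood equals `c_n` times the
Jeffreys-prior marginal likelihood:
`sup_{v>0} (2πv)^(-n/2) exp(-S(μ)/(2v)) = c_n ∫₀^∞ (2πv)^(-n/2) exp(-S(μ)/(2v)) (1/v) dv`,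
the constant `c_n` depending only on `n`. -/
theorem profile_eq_const_mul_marginal (n : ℕ) (hn : 1 ≤ n) :
    ∀ (y : Fin n → ℝ) (μ : ℝ), 0 < ∑ i, (y i - μ) ^ 2 →
      sSup ((fun v : ℝ => (2 * π * v) ^ (-(n : ℝ) / 2) *
          Real.exp (-(∑ i, (y i - μ) ^ 2) / (2 * v))) '' Ioi 0) =
        ((n : ℝ) / 2) ^ ((n : ℝ) / 2) * Real.exp (-(n : ℝ) / 2) / Real.Gamma ((n : ℝ) / 2) *
          ∫ v in Ioi (0 : ℝ),
            (2 * π * v) ^ (-(n : ℝ) / 2) *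
              Real.exp (-(∑ i, (y i - μ) ^ 2) / (2 * v)) * (1 / v) := by
  intro y μ hS
  set S := ∑ i, (y i - μ) ^ 2 with hSdef
  set a : ℝ := (n : ℝ) / 2 with hadef
  have ha : 0 < a := by
    have : (1:ℝ) ≤ (n:ℝ) := by exact_mod_cast hn
    positivity
  have hexp : -(n : ℝ) / 2 = -a := by rw [hadef]; ring
  rw [hexp]
  rw [(sup_eval a S ha hS).csSup_eq, marginal_eval a S ha hS]
  have hG : Real.Gamma a ≠ 0 := (Real.Gamma_pos_of_pos ha).ne'
  have h1 : (2 * π * (S / (2 * a))) ^ (-a) = a ^ a * (π * S) ^ (-a) := by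
    have h2 : 2 * π * (S / (2 * a)) = (π * S) * a⁻¹ := by field_simp
    rw [h2, Real.mul_rpow (by positivity) (by positivity), Real.inv_rpow ha.le,
      Real.rpow_neg ha.le a, inv_inv]
    ring
  rw [h1]
  field_simp
end

section
/- Let n ≥ 1, let y₁, …, yₙ be real numbers, let p : ℝ → [0, ∞) be any prior density function for μ, and set c_n = (n/2)^(n/2) * exp(−n/2) / Γ(n/2). Then for every real μ with S(μ) := ∑_{i=1}^n (yᵢ − μ)² > 0, the unnormalized profile posterior equals c_n times the unnormalized marginal posterior obtained under the Jeffreys prior on the variance: (sup_{v > 0} (2πv)^(-n/2) * exp(−S(μ)/(2v))) * p(μ) = c_n * ∫₀^∞ (2πv)^(-n/2) * exp(−S(μ)/(2v)) * p(μ) * (1/v) dv. Hence the profile likelihood multiplied by any prior p(μ) yields, after normalization, the same posterior distribution for μ as marginalization over the Jeffreys prior p(v) ∝ 1/v. -/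
open Real Set MeasureTheory

/-- For any prior density `p : ℝ → [0,∞)` on `μ` and
`c_n = (n/2)^(n/2) e^(-n/2) / Γ(n/2)`, for every `μ` with `S(μ) = ∑ (yᵢ - μ)² > 0`,
the unnormalized profile posterior equals `c_n` times the unnormalized marginal
posterior under the Jeffreys variance prior:
`(sup_{v>0} (2πv)^(-n/2) exp(-S(μ)/(2v))) p(μ)
  = c_n ∫₀^∞ (2πv)^(-n/2) exp(-S(μ)/(2v)) p(μ) (1/v) dv`. -/
theorem profile_posterior_eq_const_mul_marginal_posterior
    (n : ℕ) (hn : 1 ≤ n) (y : Fin n → ℝ) (p : ℝ → ℝ) (hp : ∀ x, 0 ≤ p x) :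
    ∀ μ : ℝ, 0 < ∑ i, (y i - μ) ^ 2 →
      sSup ((fun v : ℝ => (2 * π * v) ^ (-(n : ℝ) / 2) *
          Real.exp (-(∑ i, (y i - μ) ^ 2) / (2 * v))) '' Ioi 0) * p μ =
        ((n : ℝ) / 2) ^ ((n : ℝ) / 2) * Real.exp (-(n : ℝ) / 2) / Real.Gamma ((n : ℝ) / 2) *
          ∫ v in Ioi (0 : ℝ),
            (2 * π * v) ^ (-(n : ℝ) / 2) *
              Real.exp (-(∑ i, (y i - μ) ^ 2) / (2 * v)) * p μ * (1 / v) := by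
  intro μ hS
  set S := ∑ i, (y i - μ) ^ 2 with hSdef
  have hn0 : (0:ℝ) < n := by exact_mod_cast hn
  have ha0 : (0:ℝ) < (n:ℝ)/2 := by positivity
  have hpi : (0:ℝ) < 2 * π := by positivity
  set f : ℝ → ℝ := fun v => (2 * π * v) ^ (-(n : ℝ) / 2) * Real.exp (-S / (2 * v)) with hf
  set v₀ : ℝ := S / n with hv0def
  have hv0 : 0 < v₀ := by positivity
  -- the supremum
  have hmax : ∀ v ∈ Ioi (0:ℝ), f v ≤ f v₀ := by
    intro v hv
    have hv' : (0:ℝ) < v := hv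
    have h1 : (2*π*v) ^ (-(n:ℝ)/2) = Real.exp (Real.log (2*π*v) * (-(n:ℝ)/2)) := by
      rw [Real.rpow_def_of_pos (by positivity)]
    have h2 : (2*π*v₀) ^ (-(n:ℝ)/2) = Real.exp (Real.log (2*π*v₀) * (-(n:ℝ)/2)) := by
      rw [Real.rpow_def_of_pos (by positivity)]
    simp only [hf, h1, h2, ← Real.exp_add]
    apply Real.exp_le_exp.2
    have hlog : Real.log (v₀ / v) ≤ v₀ / v - 1 := Real.log_le_sub_one_of_pos (by positivity)
    have hlogdiv : Real.log (v₀/v) = Real.log (2*π*v₀) - Real.log (2*π*v) := by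
      rw [Real.log_div hv0.ne' hv'.ne', Real.log_mul (by positivity) hv0.ne',
        Real.log_mul (by positivity) hv'.ne']
      ring
    have h3 : (n:ℝ)/2 * (v₀ / v) = S / (2*v) := by
      rw [hv0def]; field_simp
    have h4 : -S / (2*v₀) = -((n:ℝ)/2) := by
      rw [hv0def]; field_simp
    have key : (n:ℝ)/2 * (Real.log (2*π*v₀) - Real.log (2*π*v)) ≤ S/(2*v) - (n:ℝ)/2 := by
      calc (n:ℝ)/2 * (Real.log (2*π*v₀) - Real.log (2*π*v))
          = (n:ℝ)/2 * Real.log (v₀/v) := by rw [hlogdiv]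
        _ ≤ (n:ℝ)/2 * (v₀/v - 1) := mul_le_mul_of_nonneg_left hlog ha0.le
        _ = (n:ℝ)/2 * (v₀/v) - (n:ℝ)/2 := by ring
        _ = S/(2*v) - (n:ℝ)/2 := by rw [h3]
    have hnd : -S / (2*v) = -(S/(2*v)) := by rw [neg_div]
    rw [h4, hnd]
    nlinarith [key]
  have hmem : f v₀ ∈ f '' Ioi 0 := ⟨v₀, hv0, rfl⟩
  have hsup : sSup (f '' Ioi 0) = f v₀ :=
    IsGreatest.csSup_eq ⟨hmem, by rintro x ⟨v, hv, rfl⟩; exact hmax v hv⟩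
  rw [hsup]
  -- the integral
  set g : ℝ → ℝ := fun u => u ^ ((n:ℝ)/2 - 1) * Real.exp (-(S/2 * u)) with hg
  have hint1 : (∫ x in Ioi (0:ℝ), (|(-1:ℝ)| * x ^ ((-1:ℝ) - 1)) • g (x ^ (-1:ℝ)))
      = ∫ u in Ioi (0:ℝ), g u := integral_comp_rpow_Ioi g (by norm_num)
  have hint2 : (∫ u in Ioi (0:ℝ), g u) = (1/(S/2)) ^ ((n:ℝ)/2) * Real.Gamma ((n:ℝ)/2) :=
    integral_rpow_mul_exp_neg_mul_Ioi ha0 (by positivity)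
  have hcongr : (∫ v in Ioi (0:ℝ),
        (2 * π * v) ^ (-(n:ℝ)/2) * Real.exp (-S / (2*v)) * p μ * (1/v))
      = ∫ x in Ioi (0:ℝ),
          (p μ * (2*π) ^ (-(n:ℝ)/2)) * ((|(-1:ℝ)| * x ^ ((-1:ℝ) - 1)) • g (x ^ (-1:ℝ))) := by
    apply setIntegral_congr_fun measurableSet_Ioi
    intro v hv
    have hv' : (0:ℝ) < v := hv
    have hexp : -S / (2*v) = -(S/2 * v ^ (-1:ℝ)) := by
      rw [Real.rpow_neg_one]; field_simp
    have hpow : (v ^ (-1:ℝ)) ^ ((n:ℝ)/2 - 1) = v ^ ((-1:ℝ) * ((n:ℝ)/2 - 1)) := by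
      rw [← Real.rpow_mul hv'.le]
    have h1v : (1:ℝ) / v = v ^ (-1:ℝ) := by rw [Real.rpow_neg_one]; exact one_div v
    have e1 : v ^ (-(n:ℝ)/2) * v ^ (-1:ℝ) = v ^ (-(n:ℝ)/2 + -1) := (Real.rpow_add hv' _ _).symm
    have e2 : v ^ ((-1:ℝ)-1) * v ^ ((-1:ℝ) * ((n:ℝ)/2 - 1)) = v ^ (-(n:ℝ)/2 + -1) := by
      rw [← Real.rpow_add hv']; norm_num; ring_nf
    simp only [hg, smul_eq_mul, abs_neg, abs_one, one_mul, hpow]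
    rw [Real.mul_rpow hpi.le hv'.le, hexp, h1v]
    calc (2*π) ^ (-(n:ℝ)/2) * v ^ (-(n:ℝ)/2) * Real.exp (-(S/2 * v ^ (-1:ℝ))) * p μ * v ^ (-1:ℝ)
        = p μ * (2*π) ^ (-(n:ℝ)/2) *
            ((v ^ (-(n:ℝ)/2) * v ^ (-1:ℝ)) * Real.exp (-(S/2 * v ^ (-1:ℝ)))) := by ring
      _ = p μ * (2*π) ^ (-(n:ℝ)/2) *
            ((v ^ ((-1:ℝ)-1) * v ^ ((-1:ℝ) * ((n:ℝ)/2 - 1))) * Real.exp (-(S/2 * v ^ (-1:ℝ)))) := by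
          rw [e1, e2]
      _ = p μ * (2*π) ^ (-(n:ℝ)/2) *
            (v ^ ((-1:ℝ)-1) * (v ^ ((-1:ℝ) * ((n:ℝ)/2 - 1)) * Real.exp (-(S/2 * v ^ (-1:ℝ))))) := by
          ring
  rw [hcongr, integral_const_mul, hint1, hint2]
  -- final algebra
  have hGamma : (0:ℝ) < Real.Gamma ((n:ℝ)/2) := Real.Gamma_pos_of_pos ha0
  have hexp0 : -S / (2*v₀) = -(n:ℝ)/2 := by rw [hv0def]; field_simp
  have hsplit : (2*π*v₀) ^ (-(n:ℝ)/2) = (2*π) ^ (-(n:ℝ)/2) * v₀ ^ (-(n:ℝ)/2) :=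
    Real.mul_rpow hpi.le hv0.le
  have hv0pow : v₀ ^ (-(n:ℝ)/2) = ((n:ℝ)/2) ^ ((n:ℝ)/2) * (1/(S/2)) ^ ((n:ℝ)/2) := by
    rw [← Real.mul_rpow (by positivity) (by positivity)]
    rw [show -(n:ℝ)/2 = -((n:ℝ)/2) from by ring, Real.rpow_neg hv0.le,
      ← Real.inv_rpow hv0.le]
    congr 1
    rw [hv0def]
    field_simp
  simp only [hf]
  rw [hsplit, hexp0, hv0pow]
  field_simp
end

section
/- Let n ≥ 1 and q ≥ 1, let x₁, …, xₙ ∈ ℝ^q, let y₁, …, yₙ be real numbers, and set c_n = (n/2)^(n/2) * exp(−n/2) / Γ(n/2). Then for every β ∈ ℝ^q with S(β) := ∑_{i=1}^n (yᵢ − ⟨xᵢ, β⟩)² > 0, the profile likelihood for β equals c_n times the marginal likelihood obtained by integrating over the Jeffreys prior p(v) = 1/v on the variance: sup_{v > 0} (2πv)^(-n/2) * exp(−S(β)/(2v)) = c_n * ∫₀^∞ (2πv)^(-n/2) * exp(−S(β)/(2v)) * (1/v) dv, with c_n independent of β and of the data. -/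
open Real Set MeasureTheory

/-!
Writing `a = n/2` and `t = S/(2v)`, the likelihood factors as `(πS)^(-a) · t^a e^(-t)`.
The map `v ↦ t` is a bijection of `(0, ∞)` preserving the Jeffreys measure `dv/v`, so the
supremum over `v` is `(πS)^(-a)` times `sup_t t^a e^(-t) = a^a e^(-a)`, while the marginal
likelihood is `(πS)^(-a)` times `∫ t^a e^(-t) dt/t = Γ(a)`. The factor `(πS)^(-a)` cancels
in the ratio.
-/

theorem rpow_mul_exp_neg_le {a t : ℝ} (ha : 0 < a) (ht : 0 ≤ t) :
    t ^ a * exp (-t) ≤ a ^ a * exp (-a) := by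
  have key : (t / a * exp (-(t / a))) ^ a ≤ exp (-1) ^ a := by
    gcongr
    exact mul_exp_neg_le_exp_neg_one _
  calc t ^ a * exp (-t) = a ^ a * (t / a * exp (-(t / a))) ^ a := by
        rw [mul_rpow (by positivity) (exp_pos _).le, ← exp_mul, div_rpow ht ha.le]
        field_simp
    _ ≤ a ^ a * exp (-a) := by
        rw [← exp_mul, neg_one_mul] at key
        gcongr

theorem integral_Ioi_inv_smul_comp_div {E : Type*} [NormedAddCommGroup E] [NormedSpace ℝ E]
    (f : ℝ → E) {c : ℝ} (hc : 0 < c) :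
    ∫ v in Ioi 0, v⁻¹ • f (c / v) = ∫ t in Ioi 0, t⁻¹ • f t := by
  have hscale := integral_comp_mul_left_Ioi' (fun t : ℝ => t⁻¹ • f t) 0 hc
  rw [mul_zero, ← integral_smul] at hscale
  rw [← integral_comp_rpow_Ioi _ (p := -1) (by norm_num), ← hscale]
  refine setIntegral_congr_fun measurableSet_Ioi fun x (hx : 0 < x) => ?_
  simp only [rpow_neg_one, smul_smul]
  congr 1
  · norm_num; field_simp
  · rw [div_inv_eq_mul]

theorem two_pi_mul_rpow_neg_mul_exp_eq {a S v : ℝ} (hS : 0 < S) (hv : 0 < v) :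
    (2 * π * v) ^ (-a) * exp (-S / (2 * v)) =
      (π * S) ^ (-a) * ((S / (2 * v)) ^ a * exp (-(S / (2 * v)))) := by
  have : 2 * π * v = π * S * (S / (2 * v))⁻¹ := by field_simp
  rw [this, mul_rpow (by positivity) (by positivity), inv_rpow (by positivity),
    ← rpow_neg (by positivity), neg_neg, neg_div]
  ring

theorem sSup_image_two_pi_mul_rpow_neg_mul_exp {a S : ℝ} (ha : 0 < a) (hS : 0 < S) :
    sSup ((fun v : ℝ => (2 * π * v) ^ (-a) * exp (-S / (2 * v))) '' Ioi 0) =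
      (π * S) ^ (-a) * (a ^ a * exp (-a)) := by
  refine IsGreatest.csSup_eq ⟨⟨S / (2 * a), mem_Ioi.2 (by positivity), ?_⟩, ?_⟩
  · dsimp only
    rw [two_pi_mul_rpow_neg_mul_exp_eq hS (by positivity), show S / (2 * (S / (2 * a))) = a by
      field_simp]
  · rintro _ ⟨v, hv : 0 < v, rfl⟩
    dsimp only
    rw [two_pi_mul_rpow_neg_mul_exp_eq hS hv]
    gcongr (π * S) ^ (-a) * ?_
    exact rpow_mul_exp_neg_le ha (by positivity)

theorem integral_two_pi_mul_rpow_neg_mul_exp_mul_one_div {a S : ℝ} (ha : 0 < a) (hS : 0 < S) :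
    ∫ v in Ioi 0, (2 * π * v) ^ (-a) * exp (-S / (2 * v)) * (1 / v) =
      (π * S) ^ (-a) * Gamma a := by
  calc ∫ v in Ioi 0, (2 * π * v) ^ (-a) * exp (-S / (2 * v)) * (1 / v)
      = ∫ v in Ioi 0, v⁻¹ • ((π * S) ^ (-a) * ((S / 2 / v) ^ a * exp (-(S / 2 / v)))) := by
        refine setIntegral_congr_fun measurableSet_Ioi fun v (hv : 0 < v) => ?_
        rw [two_pi_mul_rpow_neg_mul_exp_eq hS hv, div_div, smul_eq_mul]
        ring
    _ = ∫ t in Ioi 0, t⁻¹ • ((π * S) ^ (-a) * (t ^ a * exp (-t))) :=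
        integral_Ioi_inv_smul_comp_div (fun t => (π * S) ^ (-a) * (t ^ a * exp (-t))) (half_pos hS)
    _ = (π * S) ^ (-a) * ∫ t in Ioi 0, exp (-t) * t ^ (a - 1) := by
        rw [← integral_const_mul]
        refine setIntegral_congr_fun measurableSet_Ioi fun t (ht : 0 < t) => ?_
        rw [smul_eq_mul, rpow_sub_one ht.ne']
        field_simp
    _ = (π * S) ^ (-a) * Gamma a := by rw [Gamma_eq_integral ha]

theorem profile_eq_const_mul_marginal_regression_general (n q : ℕ) (hn : 1 ≤ n) :
    ∀ (x : Fin n → EuclideanSpace ℝ (Fin q)) (y : Fin n → ℝ)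
      (β : EuclideanSpace ℝ (Fin q)), 0 < ∑ i, (y i - inner ℝ (x i) β : ℝ) ^ 2 →
      sSup ((fun v : ℝ => (2 * π * v) ^ (-(n : ℝ) / 2) *
          Real.exp (-(∑ i, (y i - inner ℝ (x i) β : ℝ) ^ 2) / (2 * v))) '' Ioi 0) =
        ((n : ℝ) / 2) ^ ((n : ℝ) / 2) * Real.exp (-(n : ℝ) / 2) / Real.Gamma ((n : ℝ) / 2) *
          ∫ v in Ioi (0 : ℝ),
            (2 * π * v) ^ (-(n : ℝ) / 2) *
              Real.exp (-(∑ i, (y i - inner ℝ (x i) β : ℝ) ^ 2) / (2 * v)) * (1 / v) := by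
  intro x y β hS
  have ha : 0 < (n : ℝ) / 2 := by positivity
  rw [neg_div, sSup_image_two_pi_mul_rpow_neg_mul_exp ha hS,
    integral_two_pi_mul_rpow_neg_mul_exp_mul_one_div ha hS]
  have hΓ := (Gamma_pos_of_pos ha).ne'
  field_simp

/-- Result 2 of the paper: In the normal linear regression model, with
`c_n = (n/2)^(n/2) e^(-n/2) / Γ(n/2)`, for every `β` with
`S(β) = ∑ (yᵢ - ⟨xᵢ, β⟩)² > 0`, the profile likelihood for `β` equals `c_n` times
the marginal likelihood under the Jeffreys prior `p(v) = 1/v` on the variance: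
`sup_{v>0} (2πv)^(-n/2) exp(-S(β)/(2v)) = c_n ∫₀^∞ (2πv)^(-n/2) exp(-S(β)/(2v)) (1/v) dv`,
with `c_n` independent of `β` and the data. -/
theorem profile_eq_const_mul_marginal_regression (n q : ℕ) (hn : 1 ≤ n) (hq : 1 ≤ q) :
    ∀ (x : Fin n → EuclideanSpace ℝ (Fin q)) (y : Fin n → ℝ)
      (β : EuclideanSpace ℝ (Fin q)), 0 < ∑ i, (y i - inner ℝ (x i) β : ℝ) ^ 2 →
      sSup ((fun v : ℝ => (2 * π * v) ^ (-(n : ℝ) / 2) *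
          Real.exp (-(∑ i, (y i - inner ℝ (x i) β : ℝ) ^ 2) / (2 * v))) '' Ioi 0) =
        ((n : ℝ) / 2) ^ ((n : ℝ) / 2) * Real.exp (-(n : ℝ) / 2) / Real.Gamma ((n : ℝ) / 2) *
          ∫ v in Ioi (0 : ℝ),
            (2 * π * v) ^ (-(n : ℝ) / 2) *
              Real.exp (-(∑ i, (y i - inner ℝ (x i) β : ℝ) ^ 2) / (2 * v)) * (1 / v) :=
  profile_eq_const_mul_marginal_regression_general n q hn
end

section
/- Let d ≥ 1, n ≥ 1, and let A be a d × d real symmetric positive definite matrix. For every d × d real symmetric positive definite matrix Σ, det(Σ)^(−n/2) * exp(−(1/2) trace(Σ⁻¹ A)) ≤ n^(nd/2) * det(A)^(−n/2) * exp(−nd/2), with equality if and only if Σ = (1/n) A. Consequently, sup over symmetric positive definite Σ of det(Σ)^(−n/2) * exp(−(1/2) trace(Σ⁻¹ A)) equals n^(nd/2) * det(A)^(−n/2) * exp(−nd/2), attained uniquely at Σ = A/n. -/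
/-!
With `M = S⁻¹ * A`, the likelihood equals `det A ^ (-n/2) * exp ((n log det M - tr M) / 2)`.
Factoring `A = Lᴴ L` with `L` invertible, `M` is similar to the positive definite matrix
`L S⁻¹ Lᴴ`, so `n log det M - tr M = ∑ᵢ (n log μᵢ - μᵢ)` over its eigenvalues `μᵢ > 0`.
Each term is at most `n log n - n` by `log x ≤ x - 1`, with equality iff `μᵢ = n`;
all eigenvalues equal to `n` means `M = n • 1`, i.e. `S = A / n`.
-/

open Real

namespace Real

lemma mul_log_sub_lt_of_ne {c x : ℝ} (hc : 0 < c) (hx : 0 < x) (hxc : x ≠ c) :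
    c * log x - x < c * log c - c := by
  have h := log_lt_sub_one_of_pos (div_pos hx hc) (by rwa [ne_eq, div_eq_one_iff_eq hc.ne'])
  rw [log_div hx.ne' hc.ne'] at h
  have := mul_lt_mul_of_pos_left h hc
  rw [mul_sub c (x / c), mul_div_cancel₀ x hc.ne'] at this
  linarith

lemma mul_log_sub_le {c x : ℝ} (hc : 0 < c) (hx : 0 < x) : c * log x - x ≤ c * log c - c := by
  rcases eq_or_ne x c with rfl | hxc
  · rfl
  · exact (mul_log_sub_lt_of_ne hc hx hxc).le

lemma sum_mul_log_sub_le {ι : Type*} [Fintype ι] {c : ℝ} (hc : 0 < c) {μ : ι → ℝ}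
    (hμ : ∀ i, 0 < μ i) : ∑ i, (c * log (μ i) - μ i) ≤ Fintype.card ι * (c * log c - c) := by
  calc ∑ i, (c * log (μ i) - μ i) ≤ ∑ _i : ι, (c * log c - c) :=
        Finset.sum_le_sum fun i _ => mul_log_sub_le hc (hμ i)
    _ = Fintype.card ι * (c * log c - c) := by
      rw [Finset.sum_const, Finset.card_univ, nsmul_eq_mul]

lemma sum_mul_log_sub_eq_iff {ι : Type*} [Fintype ι] {c : ℝ} (hc : 0 < c) {μ : ι → ℝ}
    (hμ : ∀ i, 0 < μ i) :
    ∑ i, (c * log (μ i) - μ i) = Fintype.card ι * (c * log c - c) ↔ ∀ i, μ i = c := by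
  have := Finset.sum_eq_sum_iff_of_le (s := Finset.univ) fun i _ => mul_log_sub_le hc (hμ i)
  simp only [Finset.sum_const, Finset.card_univ, nsmul_eq_mul, Finset.mem_univ,
    true_implies] at this
  rw [this]
  refine forall_congr' fun i => ⟨fun h => ?_, fun h => by rw [h]⟩
  by_contra hne
  exact (mul_log_sub_lt_of_ne hc (hμ i) hne).ne h

lemma rpow_mul_rpow_mul_exp_eq {c a : ℝ} (hc : 0 < c) (k : ℝ) :
    c ^ (c * k / 2) * a ^ (-c / 2) * exp (-(c * k) / 2) =
      a ^ (-c / 2) * exp (k * (c * log c - c) / 2) := by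
  rw [rpow_def_of_pos hc, mul_right_comm, ← exp_add, mul_comm]
  congr 2
  ring

end Real

namespace Matrix

variable {ι : Type*} [Fintype ι] [DecidableEq ι]

lemma IsHermitian.eq_smul_one_of_eigenvalues_eq {B : Matrix ι ι ℝ} (hB : B.IsHermitian) {c : ℝ}
    (h : ∀ i, hB.eigenvalues i = c) : B = c • 1 := by
  have hdiag : diagonal (RCLike.ofReal ∘ hB.eigenvalues) = algebraMap ℝ (Matrix ι ι ℝ) c := by
    rw [algebraMap_eq_diagonal]
    congr 1
    ext i
    simp [h]
  rw [hB.spectral_theorem, hdiag, AlgHomClass.commutes, Algebra.algebraMap_eq_smul_one]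

lemma PosDef.mul_log_det_sub_trace_eq_sum {B : Matrix ι ι ℝ} (hB : B.PosDef) (c : ℝ) :
    c * log B.det - B.trace = ∑ i, (c * log (hB.1.eigenvalues i) - hB.1.eigenvalues i) := by
  rw [hB.1.det_eq_prod_eigenvalues, hB.1.trace_eq_sum_eigenvalues]
  simp only [RCLike.ofReal_real_eq_id, id]
  rw [log_prod fun i _ => (hB.eigenvalues_pos i).ne', Finset.mul_sum, Finset.sum_sub_distrib]

lemma PosDef.mul_log_det_sub_trace_le {B : Matrix ι ι ℝ} (hB : B.PosDef) {c : ℝ} (hc : 0 < c) :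
    c * log B.det - B.trace ≤ Fintype.card ι * (c * log c - c) := by
  rw [hB.mul_log_det_sub_trace_eq_sum]
  exact sum_mul_log_sub_le hc hB.eigenvalues_pos

lemma PosDef.mul_log_det_sub_trace_eq_iff {B : Matrix ι ι ℝ} (hB : B.PosDef) {c : ℝ}
    (hc : 0 < c) :
    c * log B.det - B.trace = Fintype.card ι * (c * log c - c) ↔ B = c • 1 := by
  refine ⟨fun h => ?_, ?_⟩
  · rw [hB.mul_log_det_sub_trace_eq_sum, sum_mul_log_sub_eq_iff hc hB.eigenvalues_pos] at h
    exact hB.1.eq_smul_one_of_eigenvalues_eq h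
  · rintro rfl
    rw [det_smul, det_one, mul_one, trace_smul, trace_one, log_pow, smul_eq_mul]
    ring

lemma conj_eq_smul_one_iff {R : Type*} [CommRing R] {P M : Matrix ι ι R} (hP : IsUnit P) (c : R) :
    P * M * P⁻¹ = c • 1 ↔ M = c • 1 := by
  have hdet := (isUnit_iff_isUnit_det P).mp hP
  refine ⟨fun h => ?_, ?_⟩
  · calc M = P⁻¹ * (P * M * P⁻¹) * P := by
          simp only [Matrix.mul_assoc, nonsing_inv_mul _ hdet, Matrix.mul_one,
            ← Matrix.mul_assoc P⁻¹, Matrix.one_mul]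
      _ = c • 1 := by
          rw [h, Matrix.mul_smul, Matrix.mul_one, Matrix.smul_mul, nonsing_inv_mul _ hdet]
  · rintro rfl
    rw [Matrix.mul_smul, Matrix.mul_one, Matrix.smul_mul, mul_nonsing_inv _ hdet]

lemma inv_mul_eq_smul_one_iff {K : Type*} [Field K] {S A : Matrix ι ι K} (hS : IsUnit S) {c : K}
    (hc : c ≠ 0) : S⁻¹ * A = c • 1 ↔ S = c⁻¹ • A := by
  have := hS.invertible
  rw [inv_mul_eq_iff_eq_mul_of_invertible, Matrix.mul_smul, Matrix.mul_one, eq_comm (a := S),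
    inv_smul_eq_iff₀ hc]

open scoped ComplexOrder in
lemma PosDef.exists_posDef_conj_inv_mul {𝕜 : Type*} [RCLike 𝕜] {S A : Matrix ι ι 𝕜}
    (hS : S.PosDef) (hA : A.PosDef) :
    ∃ P : Matrix ι ι 𝕜, IsUnit P ∧ (P * (S⁻¹ * A) * P⁻¹).PosDef := by
  open scoped MatrixOrder in
  obtain ⟨L, hL, rfl⟩ :=
    CStarAlgebra.isStrictlyPositive_iff_eq_star_mul_self.mp hA.isStrictlyPositive
  have hconj : L * (S⁻¹ * (star L * L)) * L⁻¹ = L * S⁻¹ * Lᴴ := by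
    rw [Matrix.mul_assoc, Matrix.mul_assoc, Matrix.mul_assoc, mul_nonsing_inv _
      ((isUnit_iff_isUnit_det L).mp hL), Matrix.mul_one, ← Matrix.mul_assoc, star_eq_conjTranspose]
  exact ⟨L, hL, hconj ▸ hS.inv.mul_mul_conjTranspose_same (vecMul_injective_iff_isUnit.mpr hL)⟩

lemma PosDef.mul_log_det_inv_mul_sub_trace_le {S A : Matrix ι ι ℝ} (hS : S.PosDef)
    (hA : A.PosDef) {c : ℝ} (hc : 0 < c) :
    c * log (S⁻¹ * A).det - (S⁻¹ * A).trace ≤ Fintype.card ι * (c * log c - c) := by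
  obtain ⟨P, hP, hB⟩ := hS.exists_posDef_conj_inv_mul hA
  simpa only [det_conj hP, trace_conj hP] using hB.mul_log_det_sub_trace_le hc

lemma PosDef.mul_log_det_inv_mul_sub_trace_eq_iff {S A : Matrix ι ι ℝ} (hS : S.PosDef)
    (hA : A.PosDef) {c : ℝ} (hc : 0 < c) :
    c * log (S⁻¹ * A).det - (S⁻¹ * A).trace = Fintype.card ι * (c * log c - c) ↔
      S = c⁻¹ • A := by
  obtain ⟨P, hP, hB⟩ := hS.exists_posDef_conj_inv_mul hA
  rw [← det_conj hP, ← trace_conj hP, hB.mul_log_det_sub_trace_eq_iff hc, conj_eq_smul_one_iff hP,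
    inv_mul_eq_smul_one_iff hS.isUnit hc.ne']

lemma PosDef.det_rpow_mul_exp_trace_inv_mul {S A : Matrix ι ι ℝ} (hS : S.PosDef)
    (hA : A.PosDef) (c : ℝ) :
    S.det ^ (-c / 2) * exp (-(1 / 2) * (S⁻¹ * A).trace) =
      A.det ^ (-c / 2) * exp ((c * log (S⁻¹ * A).det - (S⁻¹ * A).trace) / 2) := by
  have hlog : log (S⁻¹ * A).det = log A.det - log S.det := by
    rw [det_mul, det_nonsing_inv, Ring.inverse_eq_inv', log_mul (inv_ne_zero hS.det_pos.ne')
      hA.det_pos.ne', log_inv]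
    ring
  rw [rpow_def_of_pos hS.det_pos, rpow_def_of_pos hA.det_pos, ← exp_add, ← exp_add, hlog]
  ring_nf

lemma PosDef.det_rpow_mul_exp_trace_le {S A : Matrix ι ι ℝ} (hS : S.PosDef) (hA : A.PosDef)
    {c : ℝ} (hc : 0 < c) :
    S.det ^ (-c / 2) * exp (-(1 / 2) * (S⁻¹ * A).trace) ≤
      c ^ (c * Fintype.card ι / 2) * A.det ^ (-c / 2) * exp (-(c * Fintype.card ι) / 2) := by
  rw [hS.det_rpow_mul_exp_trace_inv_mul hA, rpow_mul_rpow_mul_exp_eq hc,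
    mul_le_mul_iff_right₀ (rpow_pos_of_pos hA.det_pos _), exp_le_exp,
    div_le_div_iff_of_pos_right two_pos]
  exact hS.mul_log_det_inv_mul_sub_trace_le hA hc

lemma PosDef.det_rpow_mul_exp_trace_eq_iff {S A : Matrix ι ι ℝ} (hS : S.PosDef)
    (hA : A.PosDef) {c : ℝ} (hc : 0 < c) :
    S.det ^ (-c / 2) * exp (-(1 / 2) * (S⁻¹ * A).trace) =
        c ^ (c * Fintype.card ι / 2) * A.det ^ (-c / 2) * exp (-(c * Fintype.card ι) / 2) ↔
      S = c⁻¹ • A := by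
  rw [hS.det_rpow_mul_exp_trace_inv_mul hA, rpow_mul_rpow_mul_exp_eq hc,
    mul_right_inj' (rpow_pos_of_pos hA.det_pos _).ne', exp_eq_exp, div_left_inj' two_ne_zero]
  exact hS.mul_log_det_inv_mul_sub_trace_eq_iff hA hc

end Matrix

theorem multivariate_profile_covariance_max_general (d n : ℕ) (hn : 1 ≤ n)
    (A : Matrix (Fin d) (Fin d) ℝ) (hA : A.PosDef) :
    (∀ S : Matrix (Fin d) (Fin d) ℝ, S.PosDef →
      S.det ^ (-(n : ℝ) / 2) * Real.exp (-(1 / 2) * (S⁻¹ * A).trace) ≤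
        (n : ℝ) ^ ((n : ℝ) * d / 2) * A.det ^ (-(n : ℝ) / 2) *
          Real.exp (-((n : ℝ) * d) / 2) ∧
      (S.det ^ (-(n : ℝ) / 2) * Real.exp (-(1 / 2) * (S⁻¹ * A).trace) =
        (n : ℝ) ^ ((n : ℝ) * d / 2) * A.det ^ (-(n : ℝ) / 2) *
          Real.exp (-((n : ℝ) * d) / 2) ↔ S = (n : ℝ)⁻¹ • A)) ∧
    IsGreatest
      ((fun S : Matrix (Fin d) (Fin d) ℝ =>
          S.det ^ (-(n : ℝ) / 2) * Real.exp (-(1 / 2) * (S⁻¹ * A).trace)) ''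
        {S | S.PosDef})
      ((n : ℝ) ^ ((n : ℝ) * d / 2) * A.det ^ (-(n : ℝ) / 2) *
        Real.exp (-((n : ℝ) * d) / 2)) := by
  have hn0 : (0 : ℝ) < n := by exact_mod_cast hn
  have hle (S : Matrix (Fin d) (Fin d) ℝ) (hS : S.PosDef) := hS.det_rpow_mul_exp_trace_le hA hn0
  have heq (S : Matrix (Fin d) (Fin d) ℝ) (hS : S.PosDef) :=
    hS.det_rpow_mul_exp_trace_eq_iff hA hn0
  simp only [Fintype.card_fin] at hle heq
  have hmax : ((n : ℝ)⁻¹ • A).PosDef := hA.smul (inv_pos.2 hn0)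
  refine ⟨fun S hS => ⟨hle S hS, heq S hS⟩, ⟨_, hmax, (heq _ hmax).2 rfl⟩, ?_⟩
  rintro _ ⟨S, hS, rfl⟩
  exact hle S hS

/-- For `d, n ≥ 1` and a `d × d` real symmetric positive definite `A`,
for every symmetric positive definite `Σ`,
`det(Σ)^(-n/2) exp(-(1/2) tr(Σ⁻¹ A)) ≤ n^(nd/2) det(A)^(-n/2) e^(-nd/2)`,
with equality iff `Σ = A/n`; consequently the supremum over the positive definite cone
equals `n^(nd/2) det(A)^(-n/2) e^(-nd/2)`, attained uniquely at `Σ = A/n`. -/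
theorem multivariate_profile_covariance_max (d n : ℕ) (hd : 1 ≤ d) (hn : 1 ≤ n)
    (A : Matrix (Fin d) (Fin d) ℝ) (hA : A.PosDef) :
    (∀ S : Matrix (Fin d) (Fin d) ℝ, S.PosDef →
      S.det ^ (-(n : ℝ) / 2) * Real.exp (-(1 / 2) * (S⁻¹ * A).trace) ≤
        (n : ℝ) ^ ((n : ℝ) * d / 2) * A.det ^ (-(n : ℝ) / 2) *
          Real.exp (-((n : ℝ) * d) / 2) ∧
      (S.det ^ (-(n : ℝ) / 2) * Real.exp (-(1 / 2) * (S⁻¹ * A).trace) =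
        (n : ℝ) ^ ((n : ℝ) * d / 2) * A.det ^ (-(n : ℝ) / 2) *
          Real.exp (-((n : ℝ) * d) / 2) ↔ S = (n : ℝ)⁻¹ • A)) ∧
    IsGreatest
      ((fun S : Matrix (Fin d) (Fin d) ℝ =>
          S.det ^ (-(n : ℝ) / 2) * Real.exp (-(1 / 2) * (S⁻¹ * A).trace)) ''
        {S | S.PosDef})
      ((n : ℝ) ^ ((n : ℝ) * d / 2) * A.det ^ (-(n : ℝ) / 2) *
        Real.exp (-((n : ℝ) * d) / 2)) :=
  multivariate_profile_covariance_max_general d n hn A hA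
end
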